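/- Let a<b be reals and f ∈ C¹([a,b],ℝ) be such that |f(x)| + |f'(x)| > 0 for all x ∈ [a,b], and f(a) ≠ 0, f(b) ≠ 0. Then the set of zeros of f in [a,b] is finite, and its cardinality Z([a,b]) satisfies Z([a,b]) = lim_{δ→0⁺} (1/(2δ)) ∫_a^b |f'(x)| 1_{{|f(x)| < δ}} dx. -/

import Mathlib

/-!
The zeros of `f` are simple and interior, hence isolated, hence finitely many. Around each zero
`z` choose a closed interval `J_z` on which `f'` does not vanish, the intervals pairwise
disjoint. By compactness `|f|` is bounded below off the open intervals, so for small `δ` the set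
`{|f| < δ}` is the disjoint union of the sets `J_z ∩ f⁻¹(-δ, δ)`. On `J_z` the function `f` is
strictly monotone with `f(z) = 0`, so it maps `J_z ∩ f⁻¹(-δ, δ)` bijectively onto `(-δ, δ)`, and
the change of variables `y = f x` gives `∫_{J_z ∩ {|f| < δ}} |f'| = 2δ`. Hence the quotient in the
limit is eventually constant, equal to the number of zeros.
-/

open MeasureTheory Filter Set Metric Topology Function

theorem ContinuousOn.measurableSet_inter_preimage {X Y : Type*} [TopologicalSpace X]
    [MeasurableSpace X] [OpensMeasurableSpace X] [TopologicalSpace Y] {f : X → Y} {s : Set X}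
    {t : Set Y} (hf : ContinuousOn f s) (hs : MeasurableSet s) (ht : IsOpen t) :
    MeasurableSet (s ∩ f ⁻¹' t) := by
  obtain ⟨u, hu, hut⟩ := continuousOn_iff'.1 hf t ht
  rw [inter_comm, hut]
  exact hu.measurableSet.inter hs

theorem Set.Finite.exists_pos_closedBall_subset_pairwise_disjoint {X : Type*}
    [MetricSpace X] {Z U : Set X} (hZ : Z.Finite) (hU : ∀ z ∈ Z, U ∈ 𝓝 z) :
    ∃ r > 0, (∀ z ∈ Z, closedBall z r ⊆ U) ∧ Z.Pairwise (Disjoint on fun z => closedBall z r) := by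
  have hsmall : ∀ᶠ r in 𝓝[>] (0 : ℝ), ∀ z ∈ Z,
      closedBall z r ⊆ U ∧ ∀ w ∈ Z, z ≠ w → r + r < dist z w := by
    refine nhdsWithin_le_nhds (hZ.eventually_all.2 fun z hz => ?_)
    refine (eventually_closedBall_subset (hU z hz)).and (hZ.eventually_all.2 fun w hw => ?_)
    by_cases hzw : z = w
    · exact Eventually.of_forall fun _ h => absurd hzw h
    · filter_upwards [eventually_lt_nhds (half_pos (dist_pos.2 hzw))] with r hr _
      linarith
  obtain ⟨r, hr, hr0⟩ := (hsmall.and self_mem_nhdsWithin).exists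
  exact ⟨r, hr0, fun z hz => (hr z hz).1,
    fun z hz w hw hzw => closedBall_disjoint_closedBall ((hr z hz).2 w hw hzw)⟩

theorem IsCompact.exists_pos_forall_abs_lt_imp_mem {X : Type*} [TopologicalSpace X]
    {s U : Set X} {f : X → ℝ} (hs : IsCompact s) (hf : ContinuousOn f s) (hU : IsOpen U)
    (hzero : ∀ x ∈ s, f x = 0 → x ∈ U) : ∃ ε > 0, ∀ x ∈ s, |f x| < ε → x ∈ U := by
  obtain ⟨ε, hε, hle⟩ := (hs.diff hU).exists_forall_le' (hf.mono sdiff_subset).abs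
    fun x hx => abs_pos.2 fun h => hx.2 (hzero x hx.1 h)
  exact ⟨ε, hε, fun x hx hlt => by_contra fun hxU => (hle x ⟨hx, hxU⟩).not_gt hlt⟩

theorem finite_setOf_eq_zero_of_hasDerivWithinAt {𝕜 F : Type*} [NontriviallyNormedField 𝕜]
    [NormedAddCommGroup F] [NormedSpace 𝕜 F] {f f' : 𝕜 → F} {s : Set 𝕜} (hs : IsCompact s)
    (hf : ∀ x ∈ s, HasDerivWithinAt f (f' x) s x) (hf' : ∀ x ∈ s, f x = 0 → f' x ≠ 0) :
    {x ∈ s | f x = 0}.Finite := by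
  have hfc : ContinuousOn f s := fun x hx => (hf x hx).continuousWithinAt
  have hclosed : IsClosed {x ∈ s | f x = 0} :=
    hfc.preimage_isClosed_of_isClosed hs.isClosed isClosed_singleton
  refine (hs.of_isClosed_subset hclosed (sep_subset _ _)).finite (isDiscrete_iff_nhdsNE.2 ?_)
  rintro x ⟨hxs, hx0⟩
  have hne : ∀ᶠ y in 𝓝[s \ {x}] x, f y ≠ 0 := (hf x hxs).eventually_ne (hf' x hxs hx0)
  have hle : 𝓝[≠] x ⊓ 𝓟 {x ∈ s | f x = 0} ≤ 𝓝[s \ {x}] x := by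
    rw [← nhdsWithin_inter']
    exact nhdsWithin_mono x fun y hy => ⟨hy.2.1, hy.1⟩
  rw [← empty_mem_iff_bot]
  filter_upwards [hle hne, mem_inf_of_right (mem_principal_self _)] with y hy hyZ
  exact hy hyZ.2

theorem strictMonoOn_or_strictAntiOn_of_hasDerivWithinAt_ne_zero {g g' : ℝ → ℝ} {D : Set ℝ}
    (hD : Convex ℝ D) (hg : ∀ x ∈ D, HasDerivWithinAt g (g' x) D x) (hg' : ∀ x ∈ D, g' x ≠ 0) :
    StrictMonoOn g D ∨ StrictAntiOn g D := by
  have hc : ContinuousOn g D := fun x hx => (hg x hx).continuousWithinAt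
  have hi : ∀ x ∈ interior D, HasDerivWithinAt g (g' x) (interior D) x :=
    fun x hx => (hg x (interior_subset hx)).mono interior_subset
  rcases hasDerivWithinAt_forall_lt_or_forall_gt_of_forall_ne hD hg hg' with hneg | hpos
  · exact .inr <|
      strictAntiOn_of_hasDerivWithinAt_neg hD hc hi fun x hx => hneg x (interior_subset hx)
  · exact .inl <|
      strictMonoOn_of_hasDerivWithinAt_pos hD hc hi fun x hx => hpos x (interior_subset hx)

theorem Ioo_neg_subset_uIcc_of_mul_nonpos {u v δ : ℝ} (huv : u * v ≤ 0) (hu : δ ≤ |u|)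
    (hv : δ ≤ |v|) : Ioo (-δ) δ ⊆ uIcc u v := by
  rintro y ⟨hy₁, hy₂⟩
  rcases le_total u 0 with hu0 | hu0
  · rw [abs_of_nonpos hu0] at hu
    rcases le_total v 0 with hv0 | hv0
    · rw [abs_of_nonpos hv0] at hv; nlinarith
    · rw [abs_of_nonneg hv0] at hv; exact mem_uIcc.2 (.inl ⟨by linarith, by linarith⟩)
  · rw [abs_of_nonneg hu0] at hu
    rcases le_total v 0 with hv0 | hv0
    · rw [abs_of_nonpos hv0] at hv; exact mem_uIcc.2 (.inr ⟨by linarith, by linarith⟩)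
    · rw [abs_of_nonneg hv0] at hv; nlinarith

theorem integral_abs_deriv_inter_preimage_Ioo {g g' : ℝ → ℝ} {c d δ : ℝ} (hcd : c ≤ d)
    (hδ : 0 ≤ δ) (hg : ∀ x ∈ Icc c d, HasDerivWithinAt g (g' x) (Icc c d) x)
    (hinj : InjOn g (Icc c d)) (hsub : Ioo (-δ) δ ⊆ uIcc (g c) (g d)) :
    ∫ x in Icc c d ∩ g ⁻¹' Ioo (-δ) δ, |g' x| = 2 * δ := by
  have hgc : ContinuousOn g (Icc c d) := fun x hx => (hg x hx).continuousWithinAt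
  have himage : g '' (Icc c d ∩ g ⁻¹' Ioo (-δ) δ) = Ioo (-δ) δ := by
    rw [image_inter_preimage, inter_eq_right, ← uIcc_of_le hcd]
    rw [← uIcc_of_le hcd] at hgc
    exact hsub.trans (intermediate_value_uIcc hgc)
  have hcov := integral_image_eq_integral_abs_deriv_smul
    (hgc.measurableSet_inter_preimage measurableSet_Icc (isOpen_Ioo (a := -δ) (b := δ)))
    (fun x hx => (hg x hx.1).mono inter_subset_left) (hinj.mono inter_subset_left) fun _ => (1 : ℝ)
  rw [himage, setIntegral_const, Real.volume_real_Ioo_of_le (by linarith)] at hcov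
  simp only [smul_eq_mul, mul_one] at hcov
  rw [← hcov]
  ring

theorem integral_abs_deriv_inter_preimage_Ioo_of_deriv_ne_zero {g g' : ℝ → ℝ} {c z d δ : ℝ}
    (hcz : c ≤ z) (hzd : z ≤ d) (hδ : 0 ≤ δ)
    (hg : ∀ x ∈ Icc c d, HasDerivWithinAt g (g' x) (Icc c d) x) (hg' : ∀ x ∈ Icc c d, g' x ≠ 0)
    (hz : g z = 0) (hc : δ ≤ |g c|) (hd : δ ≤ |g d|) :
    ∫ x in Icc c d ∩ g ⁻¹' Ioo (-δ) δ, |g' x| = 2 * δ := by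
  have hcd := hcz.trans hzd
  have hzI : z ∈ Icc c d := ⟨hcz, hzd⟩
  have hcI : c ∈ Icc c d := left_mem_Icc.2 hcd
  have hdI : d ∈ Icc c d := right_mem_Icc.2 hcd
  obtain ⟨hinj, hsign⟩ : InjOn g (Icc c d) ∧ g c * g d ≤ 0 := by
    rcases strictMonoOn_or_strictAntiOn_of_hasDerivWithinAt_ne_zero (convex_Icc c d) hg hg' with
      hmono | hanti
    · have hgc := hmono.monotoneOn hcI hzI hcz
      have hgd := hmono.monotoneOn hzI hdI hzd
      rw [hz] at hgc hgd
      exact ⟨hmono.injOn, mul_nonpos_of_nonpos_of_nonneg hgc hgd⟩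
    · have hgc := hanti.antitoneOn hcI hzI hcz
      have hgd := hanti.antitoneOn hzI hdI hzd
      rw [hz] at hgc hgd
      exact ⟨hanti.injOn, mul_nonpos_of_nonneg_of_nonpos hgc hgd⟩
  exact integral_abs_deriv_inter_preimage_Ioo hcd hδ hg hinj
    (Ioo_neg_subset_uIcc_of_mul_nonpos hsign hc hd)

theorem intervalIntegral_ite_eq_sum_setIntegral {E : Type*} [NormedAddCommGroup E]
    [NormedSpace ℝ E] {F : ℝ → E} {p : ℝ → Prop} [DecidablePred p] {a b : ℝ} (hab : a ≤ b)
    {ι : Type*} (T : Finset ι) {S : ι → Set ℝ} (hS : ∀ i ∈ T, MeasurableSet (S i))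
    (hdisj : (T : Set ι).Pairwise (Disjoint on S)) (hint : ∀ i ∈ T, IntegrableOn F (S i))
    (hsub : ∀ i ∈ T, S i ⊆ Icc a b) (hp : ∀ x ∈ Icc a b, p x ↔ x ∈ ⋃ i ∈ T, S i) :
    ∫ x in a..b, (if p x then F x else 0) = ∑ i ∈ T, ∫ x in S i, F x := by
  calc ∫ x in a..b, (if p x then F x else 0)
      = ∫ x in Icc a b, (⋃ i ∈ T, S i).indicator F x := by
        rw [intervalIntegral.integral_of_le hab, ← integral_Icc_eq_integral_Ioc]
        refine setIntegral_congr_fun measurableSet_Icc fun x hx => ?_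
        by_cases h : p x
        · simp [h, indicator_of_mem ((hp x hx).1 h)]
        · simp [h, indicator_of_notMem (mt (hp x hx).2 h)]
    _ = ∫ x in ⋃ i ∈ T, S i, F x := by
        rw [setIntegral_indicator (Finset.measurableSet_biUnion T hS),
          inter_eq_right.2 (iUnion₂_subset hsub)]
    _ = ∑ i ∈ T, ∫ x in S i, F x := integral_biUnion_finset T hS hdisj hint

theorem intervalIntegral_ite_abs_lt_eq_card_mul {a b r δ : ℝ} {f f' : ℝ → ℝ} (hab : a ≤ b)
    (hderiv : ∀ x ∈ Icc a b, HasDerivWithinAt f (f' x) (Icc a b) x)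
    (hcont : ContinuousOn f' (Icc a b)) (T : Finset ℝ) (hT : ∀ z ∈ T, f z = 0) (hr : 0 ≤ r)
    (hball : ∀ z ∈ T, closedBall z r ⊆ {x ∈ Icc a b | f' x ≠ 0})
    (hdisj : (T : Set ℝ).Pairwise (Disjoint on fun z => closedBall z r)) (hδ : 0 ≤ δ)
    (hnear : ∀ x ∈ Icc a b, |f x| ≤ δ → ∃ z ∈ T, x ∈ ball z r) :
    ∫ x in a..b, (if |f x| < δ then |f' x| else 0) = T.card * (2 * δ) := by
  have hIcc : ∀ z ∈ T, closedBall z r ⊆ Icc a b := fun z hz => (hball z hz).trans (sep_subset _ _)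
  have hfc : ContinuousOn f (Icc a b) := fun x hx => (hderiv x hx).continuousWithinAt
  have hsphere : ∀ z ∈ T, ∀ x ∈ sphere z r, δ ≤ |f x| := by
    intro z hz x hx
    by_contra! hlt
    obtain ⟨w, hw, hxw⟩ := hnear x (hIcc z hz (sphere_subset_closedBall hx)) hlt.le
    rcases eq_or_ne z w with rfl | hzw
    · exact (mem_sphere.1 hx).not_lt hxw
    · exact (hdisj hz hw hzw).ne_of_mem (sphere_subset_closedBall hx)
        (ball_subset_closedBall hxw) rfl
  rw [intervalIntegral_ite_eq_sum_setIntegral hab T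
    (S := fun z => closedBall z r ∩ f ⁻¹' Ioo (-δ) δ)]
  · have hpiece : ∀ z ∈ T, ∫ x in closedBall z r ∩ f ⁻¹' Ioo (-δ) δ, |f' x| = 2 * δ := by
      intro z hz
      have hJ := hIcc z hz
      have hJ' := hball z hz
      have hends : z - r ∈ sphere z r ∧ z + r ∈ sphere z r := by
        simp [abs_of_nonneg hr]
      rw [Real.closedBall_eq_Icc] at hJ hJ' ⊢
      exact integral_abs_deriv_inter_preimage_Ioo_of_deriv_ne_zero (by linarith) (by linarith) hδ
        (fun x hx => (hderiv x (hJ hx)).mono hJ) (fun x hx => (hJ' hx).2) (hT z hz)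
        (hsphere z hz _ hends.1) (hsphere z hz _ hends.2)
    rw [Finset.sum_congr rfl hpiece, Finset.sum_const, nsmul_eq_mul]
  · exact fun z hz => (hfc.mono (hIcc z hz)).measurableSet_inter_preimage
      measurableSet_closedBall isOpen_Ioo
  · exact hdisj.mono' fun z w h => h.mono inter_subset_left inter_subset_left
  · exact fun z hz => ((hcont.abs.mono (hIcc z hz)).integrableOn_compact
      (isCompact_closedBall z r)).mono_set inter_subset_left
  · exact fun z hz => inter_subset_left.trans (hIcc z hz)
  · intro x hx
    simp only [mem_iUnion, mem_inter_iff, mem_preimage, mem_Ioo, ← abs_lt, exists_prop]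
    exact ⟨fun h => (hnear x hx h.le).imp fun z hz => ⟨hz.1, ball_subset_closedBall hz.2, h⟩,
      fun ⟨_, _, _, h⟩ => h⟩

theorem statement10
    (a b : ℝ) (hab : a < b) (f f' : ℝ → ℝ)
    (hderiv : ∀ x ∈ Set.Icc a b, HasDerivWithinAt f (f' x) (Set.Icc a b) x)
    (hcont : ContinuousOn f' (Set.Icc a b))
    (hnz : ∀ x ∈ Set.Icc a b, 0 < |f x| + |f' x|)
    (ha : f a ≠ 0) (hb : f b ≠ 0) :
    {x ∈ Set.Icc a b | f x = 0}.Finite ∧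
      Tendsto
        (fun δ : ℝ => (∫ x in a..b, if |f x| < δ then |f' x| else 0) / (2 * δ))
        (nhdsWithin 0 (Set.Ioi 0))
        (nhds (({x ∈ Set.Icc a b | f x = 0}.ncard : ℝ))) := by
  set Z := {x ∈ Icc a b | f x = 0}
  have hsimple : ∀ z ∈ Z, z ∈ Ioo a b ∧ f' z ≠ 0 := by
    rintro z ⟨hz, hz0⟩
    refine ⟨⟨hz.1.lt_of_ne ?_, hz.2.lt_of_ne ?_⟩, fun h => by simpa [hz0, h] using hnz z hz⟩
    · rintro rfl; exact ha hz0
    · rintro rfl; exact hb hz0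
  have hfin : Z.Finite := finite_setOf_eq_zero_of_hasDerivWithinAt isCompact_Icc hderiv
    fun z hz hz0 => (hsimple z ⟨hz, hz0⟩).2
  refine ⟨hfin, ?_⟩
  obtain ⟨r, hr, hball, hdisj⟩ := hfin.exists_pos_closedBall_subset_pairwise_disjoint
    (U := {x ∈ Icc a b | f' x ≠ 0}) fun z hz => by
      obtain ⟨⟨hza, hzb⟩, hz'⟩ := hsimple z hz
      exact inter_mem (Icc_mem_nhds hza hzb)
        (((hcont z ⟨hza.le, hzb.le⟩).continuousAt (Icc_mem_nhds hza hzb)).eventually_ne hz')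
  obtain ⟨ε, hε, hnear⟩ := isCompact_Icc.exists_pos_forall_abs_lt_imp_mem
    (fun x hx => (hderiv x hx).continuousWithinAt)
    (isOpen_biUnion fun z (_ : z ∈ Z) => isOpen_ball)
    fun z hz hz0 => mem_biUnion ⟨hz, hz0⟩ (mem_ball_self hr)
  refine tendsto_const_nhds.congr' ?_
  filter_upwards [Ioo_mem_nhdsGT hε] with δ ⟨hδ, hδε⟩
  rw [intervalIntegral_ite_abs_lt_eq_card_mul hab.le hderiv hcont hfin.toFinset
    (fun z hz => (hfin.mem_toFinset.1 hz).2) hr.le (fun z hz => hball z (hfin.mem_toFinset.1 hz))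
    (by rwa [hfin.coe_toFinset]) hδ.le
    fun x hx hle => by simpa using hnear x hx (hle.trans_lt hδε), Set.ncard_eq_toFinset_card Z hfin]
  field_simp
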